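/- arXiv:1406.1262 — 6 statements merged into one kernel-verified Lean document; each statement's English description precedes it below -/
import Mathlib

section
/- The quotient of GL₂(ℤ/3ℤ) by the normal subgroup N := { [[x,-y],[y,x]] : x²+y² ≡ 1 mod 3 } ∪ { [[x,y],[y,-x]] : x²+y² ≡ -1 mod 3 } is isomorphic to GL₂(ℤ/2ℤ). -/
/-!
`N` is a quaternion group `Q₈` with a complement `S ≅ S₃`: the reduction mod 3 of the copy of
`S₃` in `GL₂(ℤ)` generated by `[[0,1],[1,0]]` and `[[0,1],[-1,-1]]`. Reduction mod 2 maps the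
same copy isomorphically onto `GL₂(𝔽₂)`, so `GL₂(𝔽₃)/N ≅ S ≅ GL₂(𝔽₂)`. Once the lift
`GL₂(𝔽₂) → GL₂(𝔽₃)` is written down, that it is a homomorphism onto a complement of `N` is a
finite check.
-/

open Matrix

def Nset : Set (GL (Fin 2) (ZMod 3)) :=
  {g | (∃ x y : ZMod 3, x ^ 2 + y ^ 2 = 1 ∧ (g : Matrix (Fin 2) (Fin 2) (ZMod 3)) = !![x, -y; y, x]) ∨
       (∃ x y : ZMod 3, x ^ 2 + y ^ 2 = -1 ∧ (g : Matrix (Fin 2) (Fin 2) (ZMod 3)) = !![x, y; y, -x])}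

theorem QuotientGroup.nonempty_mulEquiv_of_complement {G K : Type*} [Group G] [Group K]
    {H : Subgroup G} [H.Normal] (s : K →* G) (hdisj : ∀ k, s k ∈ H → k = 1)
    (hcover : ∀ g, ∃ k, (s k)⁻¹ * g ∈ H) : Nonempty (G ⧸ H ≃* K) := by
  let φ : K →* G ⧸ H := (QuotientGroup.mk' H).comp s
  have hinj : Function.Injective φ := (injective_iff_map_eq_one φ).2 fun k hk =>
    hdisj k ((QuotientGroup.eq_one_iff _).1 hk)
  have hsurj : Function.Surjective φ := by
    rintro ⟨g⟩
    obtain ⟨k, hk⟩ := hcover g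
    exact ⟨k, QuotientGroup.eq.2 hk⟩
  exact ⟨(MulEquiv.ofBijective φ ⟨hinj, hsurj⟩).symm⟩

instance : DecidablePred (· ∈ Nset) := fun _ => by unfold Nset; infer_instance

/-- Reduction mod 3 of the lift of `k` to that copy of `S₃` in `GL₂(ℤ)`: the row `(1,1)` lifts
to `(-1,-1)`, every other `0/1` row to itself. -/
def liftToZMod3 : GL (Fin 2) (ZMod 2) →* GL (Fin 2) (ZMod 3) :=
  MonoidHom.toHomUnits
    { toFun := fun k => of fun i j => ((k i j).val : ZMod 3) * (1 + ((k i 0 * k i 1).val : ZMod 3))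
      map_one' := by decide
      map_mul' := by decide }

theorem eq_one_of_liftToZMod3_mem_Nset : ∀ k, liftToZMod3 k ∈ Nset → k = 1 := by
  decide +kernel

theorem exists_liftToZMod3_inv_mul_mem_Nset :
    ∀ g : GL (Fin 2) (ZMod 3), ∃ k, (liftToZMod3 k)⁻¹ * g ∈ Nset := by
  decide +kernel

theorem quotient_by_Nset_iso_GL2_ZMod2 (H : Subgroup (GL (Fin 2) (ZMod 3))) [H.Normal]
    (hH : (H : Set (GL (Fin 2) (ZMod 3))) = Nset) :
    Nonempty ((GL (Fin 2) (ZMod 3) ⧸ H) ≃* GL (Fin 2) (ZMod 2)) := by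
  have mem_H : ∀ g, g ∈ H ↔ g ∈ Nset := fun g => by rw [← SetLike.mem_coe, hH]
  exact QuotientGroup.nonempty_mulEquiv_of_complement liftToZMod3
    (fun k hk => eq_one_of_liftToZMod3_mem_Nset k ((mem_H _).1 hk))
    (fun g => (exists_liftToZMod3_inv_mul_mem_Nset g).imp fun _ => (mem_H _).2)
end

section
/- Every normal subgroup of GL₂(ℤ/3ℤ) of index 6 equals N := { [[x,-y],[y,x]] : x²+y² ≡ 1 mod 3 } ∪ { [[x,y],[y,-x]] : x²+y² ≡ -1 mod 3 }; in other words, GL₂(ℤ/3ℤ) has exactly one normal subgroup of index 6. -/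
open Matrix

/-!
`N` is a normal `2`-subgroup of order `8`, and so is every normal subgroup `H` of index `6`.
Then `H ⊔ N` is again a normal `2`-subgroup. It cannot have order `16`: a normal subgroup of
full `2`-power order contains every `2`-element, but the involutions `diag(1, -1)` and
`!![1, 1; 0, -1]` have a product of order `3`. Hence `H ⊔ N` has order `8` and equals both.
-/

section PGroup

variable {G : Type*} [Group G] [Finite G] {p : ℕ}

theorem IsPGroup.eq_of_normal_of_forall_card_le {H K : Subgroup G} [H.Normal] [K.Normal]
    (hH : IsPGroup p H) (hK : IsPGroup p K) (hcard : Nat.card H ≤ Nat.card K)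
    (hmax : ∀ L : Subgroup G, L.Normal → IsPGroup p L → Nat.card L ≤ Nat.card H) : H = K := by
  have hsup := hmax (H ⊔ K) inferInstance (hH.to_sup_of_normal_right hK)
  calc H = H ⊔ K := Subgroup.eq_of_le_of_card_ge le_sup_left hsup
    _ = K := (Subgroup.eq_of_le_of_card_ge le_sup_right (hsup.trans hcard)).symm

theorem Subgroup.mem_of_normal_of_card_eq_pow_factorization [Fact p.Prime] {L : Subgroup G}
    [L.Normal] (hL : Nat.card L = p ^ (Nat.card G).factorization p) {g : G} {k : ℕ}
    (hg : g ^ p ^ k = 1) : g ∈ L := by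
  obtain ⟨i, hi⟩ := exists_orderOf_eq_prime_pow_iff.mpr ⟨k, hg⟩
  obtain ⟨P, hP⟩ := (IsPGroup.of_card ((Nat.card_zpowers g).trans hi)).exists_le_sylow
  have hLP : L = P := Subgroup.eq_of_le_of_card_ge ((IsPGroup.of_card hL).le_sylow_of_normal P)
    (P.card_eq_multiplicity.trans hL.symm).le
  exact hLP ▸ hP (Subgroup.mem_zpowers g)

end PGroup

theorem card_GL_two_zmod_three : Nat.card (GL (Fin 2) (ZMod 3)) = 48 := by
  rw [card_GL_field]; decide

theorem factorization_card_GL_two_zmod_three :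
    (Nat.card (GL (Fin 2) (ZMod 3))).factorization 2 = 4 := by
  rw [card_GL_two_zmod_three, Nat.factorization_def _ Nat.prime_two, show 48 = 2 ^ 4 * 3 from rfl,
    padicValNat.mul (by decide) (by decide), padicValNat.prime_pow,
    padicValNat.eq_zero_of_not_dvd (by decide)]

theorem exists_pow_two_eq_one_orderOf_mul_eq_three :
    ∃ a b : GL (Fin 2) (ZMod 3), a ^ 2 = 1 ∧ b ^ 2 = 1 ∧ orderOf (a * b) = 3 := by
  refine ⟨⟨!![1, 0; 0, -1], !![1, 0; 0, -1], by decide, by decide⟩,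
    ⟨!![1, 1; 0, -1], !![1, 1; 0, -1], by decide, by decide⟩,
    Units.ext (by decide), Units.ext (by decide), orderOf_eq_prime (Units.ext (by decide)) ?_⟩
  exact fun h => absurd (Units.ext_iff.1 h) (by decide)

theorem card_le_eight_of_isPGroup_two {L : Subgroup (GL (Fin 2) (ZMod 3))} [L.Normal]
    (hL : IsPGroup 2 L) : Nat.card L ≤ 8 := by
  obtain ⟨P, hLP⟩ := hL.exists_le_sylow
  have hP : Nat.card P = 2 ^ 4 := by
    rw [P.card_eq_multiplicity, factorization_card_GL_two_zmod_three]
  obtain ⟨k, hk_le, hk⟩ := (Nat.dvd_prime_pow Nat.prime_two).1 (hP ▸ Subgroup.card_dvd_of_le hLP)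
  have hk4 : k ≠ 4 := by
    rintro rfl
    obtain ⟨a, b, ha, hb, hab⟩ := exists_pow_two_eq_one_orderOf_mul_eq_three
    have hfull : Nat.card L = 2 ^ (Nat.card (GL (Fin 2) (ZMod 3))).factorization 2 := by
      rw [hk, factorization_card_GL_two_zmod_three]
    have hab_mem : a * b ∈ L := L.mul_mem
      (Subgroup.mem_of_normal_of_card_eq_pow_factorization hfull (k := 1) ha)
      (Subgroup.mem_of_normal_of_card_eq_pow_factorization hfull (k := 1) hb)
    have h3 : 3 ∣ 2 ^ 4 := hab ▸ hk ▸ L.orderOf_dvd_natCard hab_mem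
    norm_num at h3
  calc Nat.card L = 2 ^ k := hk
    _ ≤ 2 ^ 3 := Nat.pow_le_pow_right two_pos (by omega)

namespace Nset

set_option maxRecDepth 10000 in
theorem mem_iff_val (g : GL (Fin 2) (ZMod 3)) :
    g ∈ Nset ↔ (g : Matrix (Fin 2) (Fin 2) (ZMod 3)) ^ 4 = 1 ∧
      (g : Matrix (Fin 2) (Fin 2) (ZMod 3)).det = 1 := by
  have key : ∀ M : Matrix (Fin 2) (Fin 2) (ZMod 3),
      ((∃ x y : ZMod 3, x ^ 2 + y ^ 2 = 1 ∧ M = !![x, -y; y, x]) ∨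
        (∃ x y : ZMod 3, x ^ 2 + y ^ 2 = -1 ∧ M = !![x, y; y, -x])) ↔ M ^ 4 = 1 ∧ M.det = 1 := by
    decide
  exact key g

theorem mem_iff (g : GL (Fin 2) (ZMod 3)) :
    g ∈ Nset ↔ g ^ 4 = 1 ∧ GeneralLinearGroup.det g = 1 := by
  rw [mem_iff_val, Units.ext_iff, Units.ext_iff, Units.val_pow_eq_pow_val,
    GeneralLinearGroup.val_det_apply, Units.val_one, Units.val_one]

/- With `z = x + iy` in `𝔽₉ = 𝔽₃[i]`, the two families act on `w ∈ 𝔽₉` as `w ↦ z w` and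
`w ↦ z w̄`, and `x ^ 2 + y ^ 2` is the norm of `z`; the witnesses below are products of such `z`. -/
theorem mul_mem {a b : GL (Fin 2) (ZMod 3)} (ha : a ∈ Nset) (hb : b ∈ Nset) : a * b ∈ Nset := by
  rcases ha with ⟨x, y, hxy, ha⟩ | ⟨x, y, hxy, ha⟩ <;>
    rcases hb with ⟨x', y', hxy', hb⟩ | ⟨x', y', hxy', hb⟩ <;>
    simp only [Nset, Set.mem_ofPred_eq, Units.val_mul, ha, hb, mul_fin_two]
  · exact .inl ⟨x * x' - y * y', x * y' + y * x',
      by linear_combination (x' ^ 2 + y' ^ 2) * hxy + hxy', by ring_nf⟩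
  · exact .inr ⟨x * x' - y * y', x * y' + y * x',
      by linear_combination (x' ^ 2 + y' ^ 2) * hxy + hxy', by ring_nf⟩
  · exact .inr ⟨x * x' + y * y', y * x' - x * y',
      by linear_combination (x' ^ 2 + y' ^ 2) * hxy - hxy', by ring_nf⟩
  · exact .inl ⟨x * x' + y * y', y * x' - x * y',
      by linear_combination (x' ^ 2 + y' ^ 2) * hxy - hxy', by ring_nf⟩

def subgroup : Subgroup (GL (Fin 2) (ZMod 3)) where
  carrier := Nset
  one_mem' := (mem_iff 1).2 ⟨one_pow 4, map_one _⟩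
  mul_mem' := mul_mem
  inv_mem' {g} hg := by
    rw [inv_eq_of_mul_eq_one_right ((pow_succ' g 3).symm.trans ((mem_iff g).1 hg).1), pow_three]
    exact mul_mem hg (mul_mem hg hg)

instance subgroup_normal : subgroup.Normal where
  conj_mem g hg h := by
    obtain ⟨hg4, hdet⟩ := (mem_iff g).1 hg
    refine (mem_iff _).2 ⟨by rw [conj_pow, hg4, mul_one, mul_inv_cancel], ?_⟩
    rw [map_mul, map_mul, hdet, mul_one, map_inv, mul_inv_cancel]

theorem isPGroup_subgroup : IsPGroup 2 subgroup :=
  fun g => ⟨2, Subtype.ext ((mem_iff g).1 g.2).1⟩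

theorem card_subgroup : Nat.card subgroup = 8 := by
  have hpre : Nset = Units.val ⁻¹' {M : Matrix (Fin 2) (Fin 2) (ZMod 3) | M ^ 4 = 1 ∧ M.det = 1} :=
    Set.ext mem_iff_val
  change Nat.card Nset = 8
  rw [Nat.card_coe_set_eq, hpre, Set.ncard_preimage_of_injective_subset_range Units.val_injective
    fun M hM => ⟨Units.ofPowEqOne M 4 hM.1 (by norm_num), rfl⟩, Set.ncard_eq_toFinset_card']
  decide

end Nset

theorem unique_normal_subgroup_index_six (H : Subgroup (GL (Fin 2) (ZMod 3)))
    (hN : H.Normal) (hi : H.index = 6) :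
    (H : Set (GL (Fin 2) (ZMod 3))) = Nset := by
  have hH : Nat.card H = 2 ^ 3 := by
    have := H.card_mul_index
    rw [hi, card_GL_two_zmod_three] at this
    omega
  have hHN : H = Nset.subgroup :=
    (IsPGroup.of_card hH).eq_of_normal_of_forall_card_le Nset.isPGroup_subgroup
      (hH.trans Nset.card_subgroup.symm).le
      fun L _ hL => (card_le_eight_of_isPGroup_two hL).trans hH.ge
  exact congrArg SetLike.coe hHN
end

section
/- Let G₀, G₁ be groups, Q a cyclic group, and ψ₀ : G₀ → Q, ψ₁ : G₁ → Q surjective homomorphisms. Let H = { (g₀, g₁) ∈ G₀ × G₁ : ψ₀(g₀) = ψ₁(g₁) } be the fibered product. Then the commutator subgroup of H equals [G₀, G₀] × [G₁, G₁]. -/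
/-!
Commutators in `G₀ × G₁` are computed coordinatewise, so `[H, H] ≤ [G₀, G₀] × [G₁, G₁]` always.
Conversely, fix `x ∈ G₁` with `ψ₁ x` generating `Q`. Every `a ∈ G₀` lifts to `(a, x ^ n) ∈ H`,
and since powers of `x` commute, the commutator of two such lifts is `(⁅a, b⁆, 1)`.
Hence `[G₀, G₀] × 1 ≤ [H, H]`, and symmetrically `1 × [G₁, G₁] ≤ [H, H]`.
-/

open scoped commutatorElement

section

variable {G₀ G₁ : Type*} [Group G₀] [Group G₁]

theorem commutator_le_prod_commutator (H : Subgroup (G₀ × G₁)) :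
    ⁅H, H⁆ ≤ (commutator G₀).prod (commutator G₁) := by
  rw [commutator_def, commutator_def, ← Subgroup.commutator_prod_prod, Subgroup.top_prod_top]
  exact Subgroup.commutator_mono le_top le_top

theorem map_inl_commutator_le_of_forall_exists_mem {H : Subgroup (G₀ × G₁)} (A : Subgroup G₁)
    [IsMulCommutative A] (hlift : ∀ a : G₀, ∃ c ∈ A, (a, c) ∈ H) :
    (commutator G₀).map (MonoidHom.inl G₀ G₁) ≤ ⁅H, H⁆ := by
  rw [Subgroup.map_le_iff_le_comap, commutator_def, Subgroup.commutator_le]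
  intro a _ b _
  obtain ⟨c, hcA, hc⟩ := hlift a
  obtain ⟨d, hdA, hd⟩ := hlift b
  have hcd : ⁅c, d⁆ = 1 :=
    commutatorElement_eq_one_iff_mul_comm.mpr (setLike_mul_comm hcA hdA)
  have hlifts : ⁅(a, c), (b, d)⁆ = MonoidHom.inl G₀ G₁ ⁅a, b⁆ := by
    ext
    · rfl
    · exact hcd
  exact Subgroup.mem_comap.mpr (hlifts ▸ Subgroup.commutator_mem_commutator hc hd)

theorem map_inr_commutator_le_of_forall_exists_mem {H : Subgroup (G₀ × G₁)} (A : Subgroup G₀)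
    [IsMulCommutative A] (hlift : ∀ b : G₁, ∃ c ∈ A, (c, b) ∈ H) :
    (commutator G₁).map (MonoidHom.inr G₀ G₁) ≤ ⁅H, H⁆ := by
  rw [Subgroup.map_le_iff_le_comap, commutator_def, Subgroup.commutator_le]
  intro a _ b _
  obtain ⟨c, hcA, hc⟩ := hlift a
  obtain ⟨d, hdA, hd⟩ := hlift b
  have hcd : ⁅c, d⁆ = 1 :=
    commutatorElement_eq_one_iff_mul_comm.mpr (setLike_mul_comm hcA hdA)
  have hlifts : ⁅(c, a), (d, b)⁆ = MonoidHom.inr G₀ G₁ ⁅a, b⁆ := by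
    ext
    · exact hcd
    · rfl
  exact Subgroup.mem_comap.mpr (hlifts ▸ Subgroup.commutator_mem_commutator hc hd)

end

theorem MonoidHom.exists_mem_zpowers_map_eq {G Q : Type*} [Group G] [Group Q] (ψ : G →* Q)
    {x : G} (hx : ∀ q : Q, q ∈ Subgroup.zpowers (ψ x)) (q : Q) :
    ∃ c ∈ Subgroup.zpowers x, ψ c = q := by
  obtain ⟨n, rfl⟩ := Subgroup.mem_zpowers_iff.mp (hx q)
  exact ⟨x ^ n, Subgroup.zpow_mem_zpowers x n, map_zpow ψ x n⟩

/-- The commutator subgroup of a fibered product over a cyclic group is the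
product of the commutator subgroups. -/
theorem commutator_of_fibered_product_over_cyclic
    {G₀ G₁ Q : Type*} [Group G₀] [Group G₁] [Group Q] [IsCyclic Q]
    (ψ₀ : G₀ →* Q) (ψ₁ : G₁ →* Q)
    (hψ₀ : Function.Surjective ψ₀) (hψ₁ : Function.Surjective ψ₁)
    (H : Subgroup (G₀ × G₁))
    (hH : (H : Set (G₀ × G₁)) = {p : G₀ × G₁ | ψ₀ p.1 = ψ₁ p.2}) :
    ⁅H, H⁆ = (commutator G₀).prod (commutator G₁) := by
  have hmem (a : G₀) (b : G₁) : (a, b) ∈ H ↔ ψ₀ a = ψ₁ b := by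
    rw [← SetLike.mem_coe, hH]
    rfl
  obtain ⟨q, hq⟩ := IsCyclic.exists_generator (α := Q)
  obtain ⟨x₀, rfl⟩ := hψ₀ q
  obtain ⟨x₁, hx₁⟩ := hψ₁ (ψ₀ x₀)
  refine le_antisymm (commutator_le_prod_commutator H) (Subgroup.prod_le_iff.mpr ⟨?_, ?_⟩)
  · refine map_inl_commutator_le_of_forall_exists_mem (Subgroup.zpowers x₁) fun a => ?_
    obtain ⟨c, hc, hψc⟩ := ψ₁.exists_mem_zpowers_map_eq (hx₁ ▸ hq) (ψ₀ a)
    exact ⟨c, hc, (hmem a c).mpr hψc.symm⟩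
  · refine map_inr_commutator_le_of_forall_exists_mem (Subgroup.zpowers x₀) fun b => ?_
    obtain ⟨c, hc, hψc⟩ := ψ₀.exists_mem_zpowers_map_eq hq (ψ₁ b)
    exact ⟨c, hc, (hmem c b).mpr hψc⟩
end

section
/- For ℓ ∈ {2, 3}, every proper subgroup H of GL₂(ℤ/ℓℤ) with det(H) = (ℤ/ℓℤ)ˣ satisfies [H,H] ⊊ [GL₂(ℤ/ℓℤ), GL₂(ℤ/ℓℤ)]. -/
/-!
Over any field `F` with an element `a ∉ {0, 1}`, conjugating a transvection by `diag(a, 1)`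
multiplies its parameter by `a`, so every transvection is a commutator in `GL₂(F)`; since
transvections generate `SL₂(F)`, the commutator subgroup of `GL₂(F)` is `ker det`. For `ℓ = 3`,
if `⁅H, H⁆` were all of it, `H` would contain `ker det` and surject onto `Fˣ`, so `H = ⊤`.
For `ℓ = 2`, `GL₂(𝔽₂)` is nonabelian of order 6, and its proper subgroups, of order at most 3,
are cyclic.
-/

open Matrix
open scoped commutatorElement

lemma Matrix.diagonal_mul_transvection {n R : Type*} [Fintype n] [DecidableEq n] [CommRing R]
    {d : n → R} {i j : n} (hj : d j = 1) (c : R) :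
    diagonal d * transvection i j c = transvection i j (d i * c) * diagonal d := by
  ext k l
  simp only [transvection, mul_add, add_mul, diagonal_mul, mul_diagonal, add_apply,
    single_apply, one_apply]
  split_ifs <;> simp_all [mul_comm]

open Matrix.SpecialLinearGroup (toGL)

namespace Matrix.GeneralLinearGroup

lemma toGL_transvection_mem_commutator {n F : Type*} [Fintype n] [DecidableEq n] [Field F]
    {a : F} (ha₀ : a ≠ 0) (ha₁ : a ≠ 1) {i j : n} (hij : i ≠ j) (c : F) :
    toGL (SpecialLinearGroup.transvection hij c) ∈ commutator (GL n F) := by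
  let t (b : F) : GL n F := toGL (SpecialLinearGroup.transvection hij b)
  let D : GL n F := mkOfDetNeZero (diagonal (Pi.mulSingle i a)) (by simp [ha₀])
  have hconj (b : F) : D * t b = t (a * b) * D := Units.ext <| by
    have := diagonal_mul_transvection (i := i) (Pi.mulSingle_eq_of_ne hij.symm a) b
    rwa [Pi.mulSingle_eq_same] at this
  have hcomm : ⁅D, t (c / (a - 1))⁆ = t c := by
    rw [commutatorElement_def, hconj, mul_inv_cancel_right, ← map_inv, ← map_mul,
      SpecialLinearGroup.transvection_inv, ← SpecialLinearGroup.transvection_add]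
    congr 2
    field_simp [sub_ne_zero.mpr ha₁]
    ring
  show t c ∈ _
  rw [← hcomm, commutator_def]
  exact Subgroup.commutator_mem_commutator (Subgroup.mem_top _) (Subgroup.mem_top _)

theorem commutator_eq_ker_det {F : Type*} [Field F] {a : F} (ha₀ : a ≠ 0) (ha₁ : a ≠ 1) :
    commutator (GL (Fin 2) F) = (det : GL (Fin 2) F →* Fˣ).ker := by
  refine le_antisymm (Abelianization.commutator_subset_ker _) fun g hg => ?_
  have hg_SL : toGL ⟨g.val, congrArg Units.val hg⟩ = g := Units.ext rfl
  rw [← hg_SL]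
  exact SL2.transvection_induction (fun A => toGL A ∈ commutator _)
    (fun _ _ hij c => toGL_transvection_mem_commutator ha₀ ha₁ hij c)
    (fun A B hA hB => by simpa using mul_mem hA hB) _

theorem commutator_ne_bot {R : Type*} [CommRing R] [Nontrivial R] :
    commutator (GL (Fin 2) R) ≠ ⊥ := by
  rw [Ne, commutator_eq_bot_iff_center_eq_top, Subgroup.eq_top_iff']
  intro h
  have hcenter := (SpecialLinearGroup.toGL_mem_center_iff _).mp
    (h (toGL (SpecialLinearGroup.transvection (zero_ne_one : (0 : Fin 2) ≠ 1) (1 : R))))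
  exact one_ne_zero ((SpecialLinearGroup.transvection_mem_center_iff _ _).mp hcenter)

end Matrix.GeneralLinearGroup

section

variable {G : Type*} [Group G]

lemma commutator_lt_commutator_of_ker_le {A : Type*} [Group A] {φ : G →* A}
    (hφ : φ.ker ≤ commutator G) {H : Subgroup G} (hH : H ≠ ⊤)
    (hmap : H.map φ = (⊤ : Subgroup G).map φ) :
    ⁅H, H⁆ < commutator G := by
  refine lt_of_le_of_ne (Subgroup.commutator_mono le_top le_top) fun hHH => hH ?_
  have hker : φ.ker ≤ H := hφ.trans (hHH ▸ Subgroup.commutator_le_self H)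
  rwa [Subgroup.map_eq_map_iff, sup_eq_left.mpr hker, top_sup_eq] at hmap

lemma Subgroup.isCyclic_of_ne_top_of_card_eq_six [Finite G] {H : Subgroup G} (hG : Nat.card G = 6)
    (hH : H ≠ ⊤) : IsCyclic H := by
  have hdvd : Nat.card H ∣ 6 := hG ▸ H.card_subgroup_dvd_card
  have hne : Nat.card H ≠ 6 := fun h => hH (H.eq_top_of_card_eq (h.trans hG.symm))
  have hdvd_prime : Nat.card H ∣ 2 ∨ Nat.card H ∣ 3 := by
    have hle : Nat.card H ≤ 6 := Nat.le_of_dvd (by norm_num) hdvd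
    interval_cases h : Nat.card H <;> simp_all
  rcases hdvd_prime with h | h
  · have : Fact (Nat.Prime 2) := ⟨Nat.prime_two⟩
    exact isCyclic_of_card_dvd_prime h
  · have : Fact (Nat.Prime 3) := ⟨Nat.prime_three⟩
    exact isCyclic_of_card_dvd_prime h

lemma commutator_lt_commutator_of_card_eq_six [Finite G] (hG : Nat.card G = 6)
    (hG_comm : commutator G ≠ ⊥) {H : Subgroup G} (hH : H ≠ ⊤) :
    ⁅H, H⁆ < commutator G := by
  have := (H.isCyclic_of_ne_top_of_card_eq_six hG hH).isMulCommutative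
  rwa [Subgroup.commutator_self_eq_bot_iff.mpr this, bot_lt_iff_ne_bot]

end

/-- For `ℓ ∈ {2,3}`, every proper subgroup of `GL₂(ℤ/ℓℤ)` with full determinant image has
commutator subgroup strictly smaller than that of `GL₂(ℤ/ℓℤ)`. -/
theorem commutator_proper_of_proper_subgroup
    (ℓ : ℕ) (hℓ : ℓ = 2 ∨ ℓ = 3)
    (H : Subgroup (GL (Fin 2) (ZMod ℓ))) (hH : H ≠ ⊤)
    (hdet : H.map (Matrix.GeneralLinearGroup.det) = ⊤) :
    ⁅H, H⁆ < commutator (GL (Fin 2) (ZMod ℓ)) := by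
  rcases hℓ with rfl | rfl
  · have hcard : Nat.card (GL (Fin 2) (ZMod 2)) = 6 := by
      rw [card_GL_field]; decide
    exact commutator_lt_commutator_of_card_eq_six hcard GeneralLinearGroup.commutator_ne_bot hH
  · have hker := (GeneralLinearGroup.commutator_eq_ker_det (a := (2 : ZMod 3)) (by decide)
      (by decide)).ge
    refine commutator_lt_commutator_of_ker_le hker hH ?_
    rw [hdet, Subgroup.map_top_of_surjective _ GeneralLinearGroup.det_surjective]
end

section
/- The reduction map GL₂(ℤ/4ℤ) → GL₂(ℤ/2ℤ) admits a splitting (a group-theoretic section), so GL₂(ℤ/4ℤ) is isomorphic to a semidirect product GL₂(ℤ/2ℤ) ⋉ M₂(ℤ/2ℤ), where GL₂(ℤ/2ℤ) acts on the additive group M₂(ℤ/2ℤ) by conjugation. -/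
open Matrix

/-- The reduction map `GL₂(ℤ/4ℤ) → GL₂(ℤ/2ℤ)`. -/
noncomputable def red42 : GL (Fin 2) (ZMod 4) →* GL (Fin 2) (ZMod 2) :=
  Matrix.GeneralLinearGroup.map (ZMod.castHom (by norm_num : (2 : ℕ) ∣ 4) (ZMod 2))

/-- Conjugation by `g ∈ GL₂(ℤ/2ℤ)` as an automorphism of the additive group `M₂(ℤ/2ℤ)`. -/
def conjAut (g : GL (Fin 2) (ZMod 2)) :
    Multiplicative (Matrix (Fin 2) (Fin 2) (ZMod 2)) ≃*
      Multiplicative (Matrix (Fin 2) (Fin 2) (ZMod 2)) :=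
  AddEquiv.toMultiplicative
  { toFun := fun A => ↑g * A * ↑g⁻¹
    invFun := fun A => ↑g⁻¹ * A * ↑g
    left_inv := by intro A; simp only [mul_assoc, Units.inv_mul, mul_one, Units.inv_mul_cancel_left]
    right_inv := by intro A; simp only [mul_assoc, Units.mul_inv, mul_one, Units.mul_inv_cancel_left]
    map_add' := by intro A B; noncomm_ring }

/-- The action of `GL₂(ℤ/2ℤ)` on `M₂(ℤ/2ℤ)` by conjugation. -/
def conjHom : GL (Fin 2) (ZMod 2) →*
    MulAut (Multiplicative (Matrix (Fin 2) (Fin 2) (ZMod 2))) where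
  toFun := conjAut
  map_one' := by
    ext A
    simp [conjAut]
  map_mul' g h := by
    ext A
    simp [conjAut, mul_assoc]

/-! `A ↦ 1 + 2A` is an injective homomorphism from `(M₂(ℤ/2), +)` onto the kernel of reduction
`GL₂(ℤ/4) → GL₂(ℤ/2)`, because `(2A)(2B) = 0`; conjugating `1 + 2A` by any lift of `h` gives
`1 + 2hAh⁻¹`. The reduction splits because `GL₂(ℤ/2) ≅ S₃` permutes the three nonzero vectors of
`(ℤ/2)²`, and these lift to three vectors of `(ℤ/4)²` with zero sum, which `S₃` permutes linearly.
A split extension is the semidirect product for the conjugation action of the splitting. -/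

local notation "ρ" => ZMod.castHom (show 2 ∣ 4 by norm_num) (ZMod 2)

section SquareZero

variable {M R : Type*} [AddGroup M] [Ring R]

def oneAddHom (ε : M →+ R) (hε : ∀ a b, ε a * ε b = 0) : Multiplicative M →* R where
  toFun a := 1 + ε a.toAdd
  map_one' := by simp
  map_mul' a b := by
    simp only [toAdd_mul, map_add, mul_add, add_mul, one_mul, mul_one, hε, add_zero]
    abel

end SquareZero

def twoMul : ZMod 2 →+ ZMod 4 where
  toFun a := 2 * (a.val : ZMod 4)
  map_zero' := by decide
  map_add' := by decide

theorem twoMul_mul_twoMul : ∀ a b, twoMul a * twoMul b = 0 := by decide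

theorem twoMul_mul : ∀ a z, twoMul a * z = twoMul (a * ρ z) := by decide

theorem twoMul_injective : Function.Injective twoMul := by decide

theorem castHom_twoMul : ∀ a, ρ (twoMul a) = 0 := by decide

theorem exists_twoMul_eq : ∀ z, ρ z = 0 → ∃ a, twoMul a = z := by decide

section Congruence

variable {n : Type*}

theorem map_twoMul_mapMatrix (A : Matrix n n (ZMod 2)) : (twoMul.mapMatrix A).map ρ = 0 := by
  ext i j
  exact castHom_twoMul _

variable [Fintype n]

theorem twoMul_mapMatrix_mul_twoMul_mapMatrix (A B : Matrix n n (ZMod 2)) :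
    twoMul.mapMatrix A * twoMul.mapMatrix B = 0 := by
  ext i j
  simp [mul_apply, twoMul_mul_twoMul]

theorem twoMul_mapMatrix_mul (A : Matrix n n (ZMod 2)) (S : Matrix n n (ZMod 4)) :
    twoMul.mapMatrix A * S = twoMul.mapMatrix (A * S.map ρ) := by
  ext i j
  simp [mul_apply, twoMul_mul, map_sum]

theorem mul_twoMul_mapMatrix (A : Matrix n n (ZMod 2)) (S : Matrix n n (ZMod 4)) :
    S * twoMul.mapMatrix A = twoMul.mapMatrix (S.map ρ * A) := by
  ext i j
  simp [mul_apply, mul_comm (S i _), mul_comm (A _ _), twoMul_mul, map_sum]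

variable [DecidableEq n]

noncomputable def oneAddTwoMul : Multiplicative (Matrix n n (ZMod 2)) →* GL n (ZMod 4) :=
  (oneAddHom twoMul.mapMatrix twoMul_mapMatrix_mul_twoMul_mapMatrix).toHomUnits

theorem coe_oneAddTwoMul (A : Multiplicative (Matrix n n (ZMod 2))) :
    (oneAddTwoMul A : Matrix n n (ZMod 4)) = 1 + twoMul.mapMatrix A.toAdd :=
  rfl

theorem oneAddTwoMul_injective : Function.Injective (oneAddTwoMul (n := n)) := by
  intro A B h
  have h' := congrArg Units.val h
  rw [coe_oneAddTwoMul, coe_oneAddTwoMul, add_right_inj] at h'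
  exact Multiplicative.toAdd.injective (Matrix.map_injective twoMul_injective h')

theorem range_oneAddTwoMul :
    (oneAddTwoMul (n := n)).range = (GeneralLinearGroup.map ρ).ker := by
  ext X
  rw [MonoidHom.mem_range, MonoidHom.mem_ker]
  constructor
  · rintro ⟨A, rfl⟩
    ext1
    change RingHom.mapMatrix ρ (1 + twoMul.mapMatrix A.toAdd) = 1
    rw [map_add, map_one, RingHom.mapMatrix_apply, map_twoMul_mapMatrix, add_zero]
  · intro hX
    have hker : ((X : Matrix n n (ZMod 4)) - 1).map ρ = 0 := by
      change RingHom.mapMatrix ρ ((X : Matrix n n (ZMod 4)) - 1) = 0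
      rw [map_sub, map_one, sub_eq_zero]
      exact congrArg Units.val hX
    choose A hA using fun i j => exists_twoMul_eq _ (congrFun (congrFun hker i) j)
    refine ⟨.ofAdd (Matrix.of A), Units.ext ?_⟩
    rw [coe_oneAddTwoMul, add_comm, ← eq_sub_iff_add_eq]
    ext i j
    exact hA i j

theorem oneAddTwoMul_conj {g : GL n (ZMod 4)} {h : GL n (ZMod 2)}
    (hg : GeneralLinearGroup.map ρ g = h) (A : Matrix n n (ZMod 2)) :
    oneAddTwoMul
        (.ofAdd ((h : Matrix n n (ZMod 2)) * A * ((h⁻¹ : GL n (ZMod 2)) : Matrix n n (ZMod 2)))) =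
      g * oneAddTwoMul (.ofAdd A) * g⁻¹ := by
  subst hg
  ext1
  rw [coe_oneAddTwoMul, Units.val_mul, Units.val_mul, coe_oneAddTwoMul, mul_add, mul_one, add_mul,
    Units.mul_inv, mul_twoMul_mapMatrix, twoMul_mapMatrix_mul]
  rfl

end Congruence

/-- Lifts the nonzero vectors `e₀, e₁, e₀ + e₁` of `(ℤ/2)²` to `e₀, e₁, -e₀ - e₁`, which sum to
zero; hence `liftMat g` sends `liftVec v` to `liftVec (g v)` for `v ≠ 0`, and `liftMat` is
multiplicative on `GL₂(ℤ/2)`. -/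
def liftVec (v : Fin 2 → ZMod 2) : Fin 2 → ZMod 4 :=
  if v = 1 then -1 else fun i => (v i).val

def liftMat (A : Matrix (Fin 2) (Fin 2) (ZMod 2)) : Matrix (Fin 2) (Fin 2) (ZMod 4) :=
  of fun i j => liftVec (A.col j) i

theorem liftMat_one : liftMat 1 = 1 := by decide

theorem liftMat_mul :
    ∀ g h : GL (Fin 2) (ZMod 2), liftMat ↑(g * h) = liftMat ↑g * liftMat ↑h := by
  decide

theorem castHom_liftVec : ∀ v i, ρ (liftVec v i) = v i := by decide

noncomputable def glLift : GL (Fin 2) (ZMod 2) →* GL (Fin 2) (ZMod 4) :=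
  MonoidHom.toHomUnits
    { toFun g := liftMat g
      map_one' := liftMat_one
      map_mul' := liftMat_mul }

theorem red42_glLift (g : GL (Fin 2) (ZMod 2)) : red42 (glLift g) = g := by
  ext i j
  exact castHom_liftVec _ i

noncomputable def glExtension :
    GroupExtension (Multiplicative (Matrix (Fin 2) (Fin 2) (ZMod 2))) (GL (Fin 2) (ZMod 4))
      (GL (Fin 2) (ZMod 2)) where
  inl := oneAddTwoMul
  rightHom := red42
  inl_injective := oneAddTwoMul_injective
  range_inl_eq_ker_rightHom := range_oneAddTwoMul
  rightHom_surjective := Function.RightInverse.surjective red42_glLift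

noncomputable def glSplitting : glExtension.Splitting where
  toMonoidHom := glLift
  rightInverse_rightHom := red42_glLift

theorem glSplitting_conjAct : glSplitting.conjAct = conjHom := by
  ext g A : 2
  apply glExtension.inl_injective
  rw [GroupExtension.Splitting.conjAct, MonoidHom.comp_apply, GroupExtension.inl_conjAct_comm]
  exact (oneAddTwoMul_conj (red42_glLift g) A.toAdd).symm

/-- The reduction map `GL₂(ℤ/4ℤ) → GL₂(ℤ/2ℤ)` splits, and `GL₂(ℤ/4ℤ)` is the semidirect
product `GL₂(ℤ/2ℤ) ⋉ M₂(ℤ/2ℤ)` with the conjugation action. -/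
theorem GL2_ZMod4_semidirect :
    (∃ s : GL (Fin 2) (ZMod 2) →* GL (Fin 2) (ZMod 4),
      red42.comp s = MonoidHom.id (GL (Fin 2) (ZMod 2))) ∧
    Nonempty (GL (Fin 2) (ZMod 4) ≃*
      Multiplicative (Matrix (Fin 2) (Fin 2) (ZMod 2)) ⋊[conjHom] GL (Fin 2) (ZMod 2)) := by
  refine ⟨⟨glLift, glSplitting.rightHom_comp_splitting⟩, ?_⟩
  rw [← glSplitting_conjAct]
  exact ⟨glSplitting.semidirectProductMulEquiv.symm⟩
end

section
/- Every group homomorphism χ : π⁻¹(SL₂(ℤ/3ℤ)) → ℤ/3ℤ is of the form a₁χ₁ + a₂χ₂ for some a₁, a₂ ∈ ℤ/3ℤ, where π : GL₂(ℤ/9ℤ) → GL₂(ℤ/3ℤ) is reduction mod 3, χ₁ = η₁ ∘ θ ∘ π and χ₂ = η₂ ∘ det, with θ : GL₂(ℤ/3ℤ) → GL₂(ℤ/2ℤ) the quotient by the unique index-6 normal subgroup, η₁ an isomorphism from the cyclic order-3 subgroup of GL₂(ℤ/2ℤ) to ℤ/3ℤ, and η₂ an isomorphism (1 + 3ℤ/9ℤ,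 ·) → (ℤ/3ℤ, +). -/
/-!
`χ₁` is nontrivial on `u = E₁₂(1)` and trivial on `v = diag(4, 1)`, and `χ₂` the other way round,
so it suffices that every `χ` vanishes on `ker χ₁ ∩ ker χ₂ = {k | π k ∈ N, det k = 1}`. Now `N` is
the quaternion group, of exponent 4, so `k⁴` lies in the congruence kernel `ker π ∩ SL₂(ℤ/9ℤ)`.
This kernel is generated by `diag(4, 7)`, `E₁₂(3)` and `E₂₁(3)`, which are commutators; hence
`χ(k)⁴ = 1`, and `χ(k) = 1` because `ℤ/3ℤ` has no 2-torsion.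
-/

open Matrix

/-- The reduction map `GL₂(ℤ/9ℤ) → GL₂(ℤ/3ℤ)`. -/
noncomputable def red93 : GL (Fin 2) (ZMod 9) →* GL (Fin 2) (ZMod 3) :=
  Matrix.GeneralLinearGroup.map (ZMod.castHom (by norm_num : (3 : ℕ) ∣ 9) (ZMod 3))

/-- `π⁻¹(SL₂(ℤ/3ℤ)) ⊆ GL₂(ℤ/9ℤ)`. -/
noncomputable def S93 : Subgroup (GL (Fin 2) (ZMod 9)) :=
  Subgroup.comap red93
    (MonoidHom.ker (Matrix.GeneralLinearGroup.det : GL (Fin 2) (ZMod 3) →* (ZMod 3)ˣ))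

theorem exists_toAdd_eq_combination {G : Type*} [Group G] {p : ℕ} [Fact p.Prime]
    (χ χ₁ χ₂ : G →* Multiplicative (ZMod p)) {u v : G}
    (hu₁ : χ₁ u ≠ 1) (hu₂ : χ₂ u = 1) (hv₁ : χ₁ v = 1) (hv₂ : χ₂ v ≠ 1)
    (hχ : ∀ k, χ₁ k = 1 → χ₂ k = 1 → χ k = 1) :
    ∃ a₁ a₂ : ZMod p, ∀ x, (χ x).toAdd = a₁ * (χ₁ x).toAdd + a₂ * (χ₂ x).toAdd := by
  rw [← toAdd_eq_zero.ne] at hu₁ hv₂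
  rw [← toAdd_eq_zero] at hu₂ hv₁
  refine ⟨(χ u).toAdd / (χ₁ u).toAdd, (χ v).toAdd / (χ₂ v).toAdd, fun x => ?_⟩
  set i := (χ₁ x).toAdd / (χ₁ u).toAdd with hi
  set j := (χ₂ x).toAdd / (χ₂ v).toAdd with hj
  have toAdd_map (ψ : G →* Multiplicative (ZMod p)) :
      (ψ (x * (u ^ i.val * v ^ j.val)⁻¹)).toAdd =
        (ψ x).toAdd - i * (ψ u).toAdd - j * (ψ v).toAdd := by
    simp only [map_mul, map_inv, map_pow, toAdd_mul, toAdd_inv, toAdd_pow, nsmul_eq_mul,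
      ZMod.natCast_zmod_val]
    ring
  have hk := hχ (x * (u ^ i.val * v ^ j.val)⁻¹)
    (by rw [← toAdd_eq_zero, toAdd_map, hv₁, hi, div_mul_cancel₀ _ hu₁]; ring)
    (by rw [← toAdd_eq_zero, toAdd_map, hu₂, hj, div_mul_cancel₀ _ hv₂]; ring)
  rw [← toAdd_eq_zero, toAdd_map, hi, hj] at hk
  field_simp at hk ⊢
  linear_combination hk

abbrev castHom93 : ZMod 9 →+* ZMod 3 := ZMod.castHom (by norm_num) (ZMod 3)

lemma red93_val (g : GL (Fin 2) (ZMod 9)) :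
    ((red93 g : GL (Fin 2) (ZMod 3)) : Matrix (Fin 2) (Fin 2) (ZMod 3)) =
      (g : Matrix (Fin 2) (Fin 2) (ZMod 9)).map castHom93 :=
  rfl

lemma mem_S93_iff (g : GL (Fin 2) (ZMod 9)) :
    g ∈ S93 ↔ ((g : Matrix (Fin 2) (Fin 2) (ZMod 9)).map castHom93).det = 1 := by
  rw [S93, Subgroup.mem_comap, MonoidHom.mem_ker, Units.ext_iff,
    GeneralLinearGroup.val_det_apply, red93_val]
  rfl

lemma pow_four_eq_one_of_mem_Nset {g : GL (Fin 2) (ZMod 3)} (hg : g ∈ Nset) : g ^ 4 = 1 := by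
  rw [Units.ext_iff, Units.val_pow_eq_pow_val, Units.val_one]
  rcases hg with ⟨x, y, hxy, hg⟩ | ⟨x, y, hxy, hg⟩ <;> rw [hg] <;> clear hg <;> revert x y <;>
    decide

lemma exists_fin_two_eq_diag_mul_transvections : ∀ a b c d : ZMod 9,
    castHom93 a = 1 → castHom93 b = 0 → castHom93 c = 0 → a * d - b * c = 1 →
    ∃ α β γ : Fin 3, !![a, b; c, d] =
      !![4, 0; 0, 7] ^ (α : ℕ) * !![1, 3; 0, 1] ^ (β : ℕ) * !![1, 0; 3, 1] ^ (γ : ℕ) := by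
  decide

lemma exists_eq_diag_mul_transvections_of_red93_eq_one {g : GL (Fin 2) (ZMod 9)}
    (hred : red93 g = 1) (hdet : GeneralLinearGroup.det g = 1) :
    ∃ α β γ : ℕ, (g : Matrix (Fin 2) (Fin 2) (ZMod 9)) =
      !![4, 0; 0, 7] ^ α * !![1, 3; 0, 1] ^ β * !![1, 0; 3, 1] ^ γ := by
  have hmap := congrArg Units.val hred
  rw [red93_val, Units.val_one] at hmap
  have entry (i j : Fin 2) := congrFun (congrFun hmap i) j
  simp only [map_apply, one_apply] at entry
  rw [Units.ext_iff, GeneralLinearGroup.val_det_apply, det_fin_two, Units.val_one] at hdet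
  obtain ⟨α, β, γ, h⟩ := exists_fin_two_eq_diag_mul_transvections _ _ _ _
    (by simpa using entry 0 0) (by simpa using entry 0 1) (by simpa using entry 1 0) hdet
  exact ⟨α, β, γ, (eta_fin_two _).trans h⟩

open scoped commutatorElement

namespace S93

def e12 : S93 :=
  ⟨⟨!![1, 1; 0, 1], !![1, 8; 0, 1], by decide, by decide⟩,
    by rw [mem_S93_iff]; decide⟩

def e21 : S93 :=
  ⟨⟨!![1, 0; 1, 1], !![1, 0; 8, 1], by decide, by decide⟩,
    by rw [mem_S93_iff]; decide⟩

def rot : S93 :=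
  ⟨⟨!![0, 8; 1, 0], !![0, 1; 8, 0], by decide, by decide⟩,
    by rw [mem_S93_iff]; decide⟩

def diag25 : S93 :=
  ⟨⟨!![2, 0; 0, 5], !![5, 0; 0, 2], by decide, by decide⟩,
    by rw [mem_S93_iff]; decide⟩

def diag41 : S93 :=
  ⟨⟨!![4, 0; 0, 1], !![7, 0; 0, 1], by decide, by decide⟩,
    by rw [mem_S93_iff]; decide⟩

lemma val_commutator_diag25_e12 :
    (((⁅diag25, e12⁆ : S93) : GL (Fin 2) (ZMod 9)) : Matrix (Fin 2) (Fin 2) (ZMod 9)) =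
      !![1, 3; 0, 1] := by
  decide

lemma val_commutator_diag25_inv_e21 :
    (((⁅diag25⁻¹, e21⁆ : S93) : GL (Fin 2) (ZMod 9)) : Matrix (Fin 2) (Fin 2) (ZMod 9)) =
      !![1, 0; 3, 1] := by
  decide

lemma val_commutator_diag25_rot :
    (((⁅diag25, rot⁆ : S93) : GL (Fin 2) (ZMod 9)) : Matrix (Fin 2) (Fin 2) (ZMod 9)) =
      !![4, 0; 0, 7] := by
  decide

lemma mem_commutator_of_red93_eq_one {g : S93} (hred : red93 g = 1)
    (hdet : GeneralLinearGroup.det (g : GL (Fin 2) (ZMod 9)) = 1) : g ∈ commutator S93 := by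
  obtain ⟨α, β, γ, hg⟩ := exists_eq_diag_mul_transvections_of_red93_eq_one hred hdet
  have hg_comm : g = ⁅diag25, rot⁆ ^ α * ⁅diag25, e12⁆ ^ β * ⁅diag25⁻¹, e21⁆ ^ γ := by
    rw [Subtype.ext_iff, Units.ext_iff, hg]
    simp only [Subgroup.coe_mul, SubmonoidClass.coe_pow, Units.val_mul, Units.val_pow_eq_pow_val,
      val_commutator_diag25_rot, val_commutator_diag25_e12, val_commutator_diag25_inv_e21]
  have mem (a b : S93) : ⁅a, b⁆ ∈ commutator S93 :=
    Subgroup.commutator_mem_commutator (Subgroup.mem_top a) (Subgroup.mem_top b)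
  rw [hg_comm]
  exact mul_mem (mul_mem (pow_mem (mem _ _) _) (pow_mem (mem _ _) _)) (pow_mem (mem _ _) _)

lemma pow_four_mem_commutator {k : S93} (hN : red93 k ∈ Nset)
    (hdet : GeneralLinearGroup.det (k : GL (Fin 2) (ZMod 9)) = 1) : k ^ 4 ∈ commutator S93 :=
  mem_commutator_of_red93_eq_one
    (by rw [SubmonoidClass.coe_pow, map_pow, pow_four_eq_one_of_mem_Nset hN])
    (by rw [SubmonoidClass.coe_pow, map_pow, hdet, one_pow])

lemma map_eq_one_of_red93_mem_Nset (χ : S93 →* Multiplicative (ZMod 3)) {k : S93}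
    (hN : red93 k ∈ Nset) (hdet : GeneralLinearGroup.det (k : GL (Fin 2) (ZMod 9)) = 1) :
    χ k = 1 := by
  have hχ4 : χ k ^ 4 = 1 := by
    rw [← map_pow]
    exact Abelianization.commutator_subset_ker χ (pow_four_mem_commutator hN hdet)
  have no_two_torsion : ∀ t : Multiplicative (ZMod 3), t ^ 4 = 1 → t = 1 := by decide
  exact no_two_torsion _ hχ4

lemma red93_e12_not_mem_Nset : red93 e12 ∉ Nset := by
  rintro (⟨x, y, hxy, h⟩ | ⟨x, y, hxy, h⟩) <;> rw [red93_val] at h <;> revert x y <;> decide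

lemma red93_diag41_mem_Nset : red93 diag41 ∈ Nset :=
  Or.inl ⟨1, 0, by decide, by rw [red93_val]; decide⟩

lemma det_e12 : GeneralLinearGroup.det (e12 : GL (Fin 2) (ZMod 9)) = 1 := by
  rw [Units.ext_iff, GeneralLinearGroup.val_det_apply]
  decide

lemma det_diag41_ne_one : GeneralLinearGroup.det (diag41 : GL (Fin 2) (ZMod 9)) ≠ 1 := by
  rw [Ne, Units.ext_iff, GeneralLinearGroup.val_det_apply]
  decide

end S93

theorem hom_to_ZMod3_is_combination_general
    (θ : GL (Fin 2) (ZMod 3) →* GL (Fin 2) (ZMod 2))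
    (hker : (MonoidHom.ker θ : Set (GL (Fin 2) (ZMod 3))) = Nset)
    (χ₁ χ₂ : S93 →* Multiplicative (ZMod 3))
    (hχ₁ : ∀ x y : S93, χ₁ x = χ₁ y ↔ θ (red93 ↑x) = θ (red93 ↑y))
    (hχ₂ : ∀ x y : S93, χ₂ x = χ₂ y ↔
      Matrix.GeneralLinearGroup.det (x : GL (Fin 2) (ZMod 9)) =
        Matrix.GeneralLinearGroup.det (y : GL (Fin 2) (ZMod 9)))
    (χ : S93 →* Multiplicative (ZMod 3)) :
    ∃ a₁ a₂ : ZMod 3, ∀ x : S93,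
      Multiplicative.toAdd (χ x) =
        a₁ * Multiplicative.toAdd (χ₁ x) + a₂ * Multiplicative.toAdd (χ₂ x) := by
  have ker_χ₁ (k : S93) : χ₁ k = 1 ↔ red93 k ∈ Nset := by
    rw [← map_one χ₁, hχ₁, ← hker, SetLike.mem_coe, MonoidHom.mem_ker, OneMemClass.coe_one,
      map_one, map_one]
  have ker_χ₂ (k : S93) : χ₂ k = 1 ↔ GeneralLinearGroup.det (k : GL (Fin 2) (ZMod 9)) = 1 := by
    rw [← map_one χ₂, hχ₂, OneMemClass.coe_one, map_one]
  refine exists_toAdd_eq_combination χ χ₁ χ₂ (u := S93.e12) (v := S93.diag41) ?_ ?_ ?_ ?_ ?_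
  · rw [Ne, ker_χ₁]; exact S93.red93_e12_not_mem_Nset
  · exact (ker_χ₂ _).mpr S93.det_e12
  · exact (ker_χ₁ _).mpr S93.red93_diag41_mem_Nset
  · rw [Ne, ker_χ₂]; exact S93.det_diag41_ne_one
  · exact fun k h₁ h₂ => S93.map_eq_one_of_red93_mem_Nset χ ((ker_χ₁ k).mp h₁) ((ker_χ₂ k).mp h₂)

/-- Every homomorphism `χ : π⁻¹(SL₂(ℤ/3ℤ)) → ℤ/3ℤ` is of the form `a₁χ₁ + a₂χ₂`, where
`χ₁ = η₁ ∘ θ ∘ π` (with `θ` the quotient by the unique index-6 normal subgroup `N` and `η₁`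
an isomorphism onto `ℤ/3ℤ` of the relevant order-3 image) and `χ₂ = η₂ ∘ det` (with `η₂`
an isomorphism `(1 + 3ℤ/9ℤ, ·) ≃ (ℤ/3ℤ, +)`). -/
theorem hom_to_ZMod3_is_combination
    (θ : GL (Fin 2) (ZMod 3) →* GL (Fin 2) (ZMod 2))
    (hθ : Function.Surjective θ)
    (hker : (MonoidHom.ker θ : Set (GL (Fin 2) (ZMod 3))) = Nset)
    (χ₁ χ₂ : S93 →* Multiplicative (ZMod 3))
    (hχ₁ : ∀ x y : S93, χ₁ x = χ₁ y ↔ θ (red93 ↑x) = θ (red93 ↑y))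
    (hχ₂ : ∀ x y : S93, χ₂ x = χ₂ y ↔
      Matrix.GeneralLinearGroup.det (x : GL (Fin 2) (ZMod 9)) =
        Matrix.GeneralLinearGroup.det (y : GL (Fin 2) (ZMod 9)))
    (χ : S93 →* Multiplicative (ZMod 3)) :
    ∃ a₁ a₂ : ZMod 3, ∀ x : S93,
      Multiplicative.toAdd (χ x) =
        a₁ * Multiplicative.toAdd (χ₁ x) + a₂ * Multiplicative.toAdd (χ₂ x) :=
  hom_to_ZMod3_is_combination_general θ hker χ₁ χ₂ hχ₁ hχ₂ χ
end
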